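/- Let C be a triangulated category with a weight structure w. Fix a morphism u : M_- → M_+ with M_- ∈ C_{w≤0} and M_+ ∈ C_{w≥0}. Suppose given a weight filtration A → M_- →π₀ G_- → A[1] of M_- avoiding weight -1 (A ∈ C_{w≤-2}, G_- ∈ C_{w≥0}, hence G_- ∈ C_{w=0}), and a weight filtration G_+ →i₀ M_+ → B → G_+[1] of M_+ avoiding weight 1 (G_+ ∈ C_{w≤0}, hence G_+ ∈ C_{w=0}, B ∈ C_{w≥2}). Then the map Hom_C(G_-, G_+) → Hom_C(M_-, M_+) given by g ↦ i₀ ∘ g ∘ π₀ is a bijection. In particular, there is a unique morphism φ : G_- → G_+ with i₀ ∘ φ ∘ π₀ = u; if moreover there is a distinguished triangle C₀ → M_- →u M_+ → C₀[1] with C₀ without weights -1 and 0, then this unique φ is an isomorphism. -/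

import Mathlib

open CategoryTheory CategoryTheory.Limits CategoryTheory.Pretriangulated

universe v u

/-- The shift `S[n]` of a class of objects `S`: the objects isomorphic to `A⟦n⟧`
for some `A ∈ S`. -/
def shiftedSet {C : Type u} [Category.{v} C] [HasShift C ℤ] (S : Set C) (n : ℤ) : Set C :=
  {X | ∃ A ∈ S, Nonempty (X ≅ A⟦n⟧)}

/-- A weight structure on a pretriangulated category `C`, following Bondarko. -/
structure WeightStructure (C : Type u) [Category.{v} C] [Preadditive C] [HasZeroObject C]
    [HasShift C ℤ] [∀ n : ℤ, (shiftFunctor C n).Additive] [Pretriangulated C] where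
  /-- the objects of weights `≤ 0` -/
  le : Set C
  /-- the objects of weights `≥ 0` -/
  ge : Set C
  /-- `C_{w ≤ 0}` is closed under retracts -/
  retract_le : ∀ (X M : C) (i : X ⟶ M) (r : M ⟶ X), i ≫ r = 𝟙 X → M ∈ le → X ∈ le
  /-- `C_{w ≥ 0}` is closed under retracts -/
  retract_ge : ∀ (X M : C) (i : X ⟶ M) (r : M ⟶ X), i ≫ r = 𝟙 X → M ∈ ge → X ∈ ge
  /-- `C_{w ≤ 0} ⊆ C_{w ≤ 1}` -/
  le_shift : le ⊆ shiftedSet le 1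
  /-- `C_{w ≥ 1} ⊆ C_{w ≥ 0}` -/
  ge_shift : shiftedSet ge 1 ⊆ ge
  /-- orthogonality -/
  orth : ∀ (M N : C), M ∈ le → N ∈ shiftedSet ge 1 → ∀ f : M ⟶ N, f = 0
  /-- existence of weight filtrations -/
  exists_wf : ∀ M : C, ∃ (A B : C) (a : A ⟶ M) (b : M ⟶ B) (δ : B ⟶ A⟦(1:ℤ)⟧),
    Triangle.mk a b δ ∈ (distTriang C) ∧ A ∈ le ∧ B ∈ shiftedSet ge 1

namespace WeightStructure

variable {C : Type u} [Category.{v} C] [Preadditive C] [HasZeroObject C]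
  [HasShift C ℤ] [∀ n : ℤ, (shiftFunctor C n).Additive] [Pretriangulated C]

/-- `C_{w ≤ n} := C_{w ≤ 0}[n]`. -/
def wLE (w : WeightStructure C) (n : ℤ) : Set C := shiftedSet w.le n

/-- `C_{w ≥ n} := C_{w ≥ 0}[n]`. -/
def wGE (w : WeightStructure C) (n : ℤ) : Set C := shiftedSet w.ge n

/-- The heart `C_{w = 0} := C_{w ≤ 0} ∩ C_{w ≥ 0}`. -/
def heart (w : WeightStructure C) : Set C := w.le ∩ w.ge

/-- An object `M` is without weights `m, …, n` if it admits a weight filtration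
avoiding these weights. -/
def WithoutWeights (w : WeightStructure C) (m n : ℤ) (M : C) : Prop :=
  ∃ (A B : C) (a : A ⟶ M) (b : M ⟶ B) (δ : B ⟶ A⟦(1:ℤ)⟧),
    Triangle.mk a b δ ∈ (distTriang C) ∧ A ∈ w.wLE (m - 1) ∧ B ∈ w.wGE (n + 1)

end WeightStructure

/-! Weight-zero parts are a reflection of `M₋` into `C_{w≥0}` and a coreflection of `M₊` into
`C_{w≤0}`, because the truncations they come from skip a weight: `π₀ : M₋ ⟶ G₋` induces
`Hom(G₋, Y) ≃ Hom(M₋, Y)` for `Y ∈ C_{w≥0}` and `i₀ : G₊ ⟶ M₊` induces `Hom(X, G₊) ≃ Hom(X, M₊)`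
for `X ∈ C_{w≤0}`. Composing the two gives the bijection, since `G₋ ∈ C_{w≤0}`.
For the isomorphism, an octahedron on `A₀ ⟶ C₀ ⟶ M₋` (with `A₀ ⟶ C₀ ⟶ B₀` the weight
filtration of `C₀`) factors `u` as `q ≫ n` through an object `N`, where `q` has fibre `A₀` of
weights `≤ -2` and `n` has cone `B₀[1]` of weights `≥ 2`. So `q` is another `C_{w≥0}`-reflection
of `M₋` and `n` another `C_{w≤0}`-coreflection of `M₊`, and uniqueness of (co)reflections makes
`φ` an isomorphism. -/

section

variable {C : Type*} [Category C]

lemma isIso_of_bijective_postcomp (S : Set C) {G G' M : C} (g : G ⟶ G') (f : G' ⟶ M)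
    (hG : G ∈ S) (hG' : G' ∈ S) (hf : ∀ X ∈ S, Function.Bijective fun x : X ⟶ G' => x ≫ f)
    (hgf : ∀ X ∈ S, Function.Bijective fun x : X ⟶ G => x ≫ g ≫ f) : IsIso g := by
  have hg : ∀ X ∈ S, Function.Bijective fun x : X ⟶ G => x ≫ g := fun X hX =>
    (Function.Bijective.of_comp_iff' (hf X hX) _).1 (by simpa [Function.comp_def] using hgf X hX)
  obtain ⟨h, hh⟩ := (hg G' hG').2 (𝟙 G')
  exact ⟨h, (hg G hG).1 (by simpa using congrArg (g ≫ ·) hh), hh⟩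

lemma isIso_of_bijective_precomp (S : Set C) {M G G' : C} (p : M ⟶ G) (g : G ⟶ G')
    (hG : G ∈ S) (hG' : G' ∈ S) (hp : ∀ Y ∈ S, Function.Bijective fun y : G ⟶ Y => p ≫ y)
    (hpg : ∀ Y ∈ S, Function.Bijective fun y : G' ⟶ Y => (p ≫ g) ≫ y) : IsIso g := by
  have hg : ∀ Y ∈ S, Function.Bijective fun y : G' ⟶ Y => g ≫ y := fun Y hY =>
    (Function.Bijective.of_comp_iff' (hp Y hY) _).1 (by simpa [Function.comp_def] using hpg Y hY)
  obtain ⟨h, hh⟩ := (hg G hG).2 (𝟙 G)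
  exact ⟨h, hh, (hg G' hG').1 (by simpa using congrArg (· ≫ g) hh)⟩

lemma shift_mem_shiftedSet [HasShift C ℤ] {S : Set C} {X : C} {m : ℤ} (h : X ∈ shiftedSet S m)
    (k : ℤ) {n : ℤ} (hn : m + k = n) : X⟦k⟧ ∈ shiftedSet S n := by
  obtain ⟨P, hP, ⟨e⟩⟩ := h
  exact ⟨P, hP, ⟨(shiftFunctor C k).mapIso e ≪≫ ((shiftFunctorAdd' C m k n hn).app P).symm⟩⟩

end

namespace WeightStructure

variable {C : Type u} [Category.{v} C] [Preadditive C] [HasZeroObject C]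
  [HasShift C ℤ] [∀ n : ℤ, (shiftFunctor C n).Additive] [Pretriangulated C]
  (w : WeightStructure C)

lemma mem_wLE_zero_iff {X : C} : X ∈ w.wLE 0 ↔ X ∈ w.le := by
  refine ⟨fun ⟨P, hP, ⟨e⟩⟩ => ?_, fun h => ⟨X, h, ⟨((shiftFunctorZero C ℤ).app X).symm⟩⟩⟩
  let e' := e ≪≫ (shiftFunctorZero C ℤ).app P
  exact w.retract_le X P e'.hom e'.inv e'.hom_inv_id hP

lemma mem_wGE_zero_iff {X : C} : X ∈ w.wGE 0 ↔ X ∈ w.ge := by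
  refine ⟨fun ⟨P, hP, ⟨e⟩⟩ => ?_, fun h => ⟨X, h, ⟨((shiftFunctorZero C ℤ).app X).symm⟩⟩⟩
  let e' := e ≪≫ (shiftFunctorZero C ℤ).app P
  exact w.retract_ge X P e'.hom e'.inv e'.hom_inv_id hP

lemma wLE_mono {m n : ℤ} (h : m ≤ n) : w.wLE m ⊆ w.wLE n := by
  induction n, h using Int.leInduction with
  | base => exact subset_rfl
  | succ n _ ih =>
    rintro X hX
    obtain ⟨P, hP, ⟨e⟩⟩ := ih hX
    obtain ⟨P', hP', ⟨e'⟩⟩ := w.le_shift hP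
    exact ⟨P', hP', ⟨e ≪≫ (shiftFunctor C n).mapIso e' ≪≫
      ((shiftFunctorAdd' C 1 n (n + 1) (add_comm 1 n)).app P').symm⟩⟩

lemma wGE_antitone {m n : ℤ} (h : m ≤ n) : w.wGE n ⊆ w.wGE m := by
  induction n, h using Int.leInduction with
  | base => exact subset_rfl
  | succ n _ ih =>
    rintro X ⟨Q, hQ, ⟨e⟩⟩
    exact ih ⟨Q⟦(1 : ℤ)⟧, w.ge_shift ⟨Q, hQ, ⟨Iso.refl _⟩⟩,
      ⟨e ≪≫ (shiftFunctorAdd' C 1 n (n + 1) (add_comm 1 n)).app Q⟩⟩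

lemma hom_eq_zero {X Y : C} {m n : ℤ} (hX : X ∈ w.wLE m) (hY : Y ∈ w.wGE n) (h : m < n)
    (f : X ⟶ Y) : f = 0 := by
  obtain ⟨P, hP, ⟨e₁⟩⟩ := w.wLE_mono (show m ≤ n - 1 by omega) hX
  obtain ⟨Q, hQ, ⟨e₂⟩⟩ := hY
  let e₃ : Y ≅ (Q⟦(1 : ℤ)⟧)⟦n - 1⟧ := e₂ ≪≫ (shiftFunctorAdd' C 1 (n - 1) n (by omega)).app Q
  obtain ⟨g, hg⟩ := (shiftFunctor C (n - 1)).map_surjective (e₁.inv ≫ f ≫ e₃.hom)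
  have hg₀ : g = 0 := w.orth _ _ hP ⟨Q, hQ, ⟨Iso.refl _⟩⟩ g
  rw [hg₀, Functor.map_zero] at hg
  simpa using (congrArg (e₁.hom ≫ · ≫ e₃.inv) hg).symm

lemma mem_le_of_forall_hom_eq_zero {Y : C}
    (h : ∀ (N : C) (f : Y ⟶ N), N ∈ w.wGE 1 → f = 0) : Y ∈ w.le := by
  obtain ⟨A, B, a, b, δ, hT, hA, hB⟩ := w.exists_wf Y
  obtain ⟨r, hr⟩ := Triangle.coyoneda_exact₂ _ hT (𝟙 Y) ((Category.id_comp _).trans (h _ b hB))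
  exact w.retract_le Y A r a hr.symm hA

lemma mem_ge_of_forall_hom_eq_zero {Y : C}
    (h : ∀ (P : C) (f : P ⟶ Y), P ∈ w.wLE (-1) → f = 0) : Y ∈ w.ge := by
  obtain ⟨A, B, a, b, δ, hT, hA, hB⟩ := w.exists_wf (Y⟦(1 : ℤ)⟧)
  let T := (Triangle.shiftFunctor C (-1)).obj (Triangle.mk a b δ)
  let e : T.obj₂ ≅ Y := (shiftFunctorCompIsoId C 1 (-1) (by omega)).app Y
  have hT₁ : T.mor₁ = 0 := (cancel_mono e.hom).1 <| by
    rw [zero_comp]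
    exact h _ _ (shift_mem_shiftedSet (w.mem_wLE_zero_iff.2 hA) (-1) (by omega))
  obtain ⟨r, hr⟩ := Triangle.yoneda_exact₂ T (Triangle.shift_distinguished _ hT (-1)) (𝟙 _)
    (by rw [hT₁, zero_comp])
  refine w.retract_ge Y _ (e.inv ≫ T.mor₂) (r ≫ e.hom) (by simp [← reassoc_of% hr]) ?_
  exact w.mem_wGE_zero_iff.1 (shift_mem_shiftedSet hB (-1) (by omega))

lemma mem_le_of_distTriang {X Y Z : C} {f : X ⟶ Y} {g : Y ⟶ Z} {h : Z ⟶ X⟦(1 : ℤ)⟧}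
    (hT : Triangle.mk f g h ∈ distTriang C) (hX : X ∈ w.le) (hZ : Z ∈ w.le) : Y ∈ w.le := by
  refine w.mem_le_of_forall_hom_eq_zero fun N y hN => ?_
  have hX₀ := w.mem_wLE_zero_iff.2 hX
  obtain ⟨z, rfl⟩ := Triangle.yoneda_exact₂ _ hT y (w.hom_eq_zero hX₀ hN zero_lt_one _)
  obtain rfl := w.hom_eq_zero (w.mem_wLE_zero_iff.2 hZ) hN zero_lt_one z
  exact comp_zero

lemma mem_ge_of_distTriang {X Y Z : C} {f : X ⟶ Y} {g : Y ⟶ Z} {h : Z ⟶ X⟦(1 : ℤ)⟧}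
    (hT : Triangle.mk f g h ∈ distTriang C) (hX : X ∈ w.ge) (hZ : Z ∈ w.ge) : Y ∈ w.ge := by
  refine w.mem_ge_of_forall_hom_eq_zero fun P y hP => ?_
  have hZ₀ := w.mem_wGE_zero_iff.2 hZ
  obtain ⟨x, rfl⟩ := Triangle.coyoneda_exact₂ _ hT y (w.hom_eq_zero hP hZ₀ neg_one_lt_zero _)
  obtain rfl := w.hom_eq_zero hP (w.mem_wGE_zero_iff.2 hX) neg_one_lt_zero x
  exact zero_comp

lemma bijective_comp_of_distTriang {G M B : C} {i : G ⟶ M} {b : M ⟶ B} {δ : B ⟶ G⟦(1 : ℤ)⟧}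
    (hT : Triangle.mk i b δ ∈ distTriang C) {m n : ℤ} (hB : B ∈ w.wGE m) (hmn : n + 2 ≤ m)
    {X : C} (hX : X ∈ w.wLE n) : Function.Bijective fun x : X ⟶ G => x ≫ i := by
  refine ⟨fun x₁ x₂ hx => sub_eq_zero.1 ?_, fun f => ?_⟩
  · obtain ⟨g, hg⟩ := Triangle.coyoneda_exact₂ _ (inv_rot_of_distTriang _ hT) (x₁ - x₂)
      ((Preadditive.sub_comp _ _ _).trans (sub_eq_zero.2 hx))
    have hB' : B⟦(-1 : ℤ)⟧ ∈ w.wGE (m - 1) := shift_mem_shiftedSet hB (-1) (by omega)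
    obtain rfl := w.hom_eq_zero hX hB' (by omega) g
    exact hg.trans zero_comp
  · obtain ⟨g, hg⟩ := Triangle.coyoneda_exact₂ _ hT f (w.hom_eq_zero hX hB (by omega) _)
    exact ⟨g, hg.symm⟩

lemma bijective_precomp_of_distTriang {A M G : C} {a : A ⟶ M} {p : M ⟶ G} {δ : G ⟶ A⟦(1 : ℤ)⟧}
    (hT : Triangle.mk a p δ ∈ distTriang C) {m n : ℤ} (hA : A ∈ w.wLE m) (hmn : m + 2 ≤ n)
    {Y : C} (hY : Y ∈ w.wGE n) : Function.Bijective fun y : G ⟶ Y => p ≫ y := by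
  refine ⟨fun y₁ y₂ hy => sub_eq_zero.1 ?_, fun f => ?_⟩
  · obtain ⟨g, hg⟩ := Triangle.yoneda_exact₃ _ hT (y₁ - y₂)
      ((Preadditive.comp_sub _ _ _).trans (sub_eq_zero.2 hy))
    have hA' : A⟦(1 : ℤ)⟧ ∈ w.wLE (m + 1) := shift_mem_shiftedSet hA 1 rfl
    obtain rfl := w.hom_eq_zero hA' hY (by omega) g
    exact hg.trans comp_zero
  · obtain ⟨g, hg⟩ := Triangle.yoneda_exact₂ _ hT f (w.hom_eq_zero hA hY (by omega) _)
    exact ⟨g, hg.symm⟩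

lemma exists_factorization_of_withoutWeights [IsTriangulated C] {C₀ Mm Mp : C}
    {vm : C₀ ⟶ Mm} {u : Mm ⟶ Mp} {vp : Mp ⟶ C₀⟦(1 : ℤ)⟧}
    (hT : Triangle.mk vm u vp ∈ distTriang C) (hC₀ : w.WithoutWeights (-1) 0 C₀)
    (hMp : Mp ∈ w.ge) :
    ∃ (N : C) (q : Mm ⟶ N) (n : N ⟶ Mp), q ≫ n = u ∧ N ∈ w.wGE 0 ∧
      (∀ Y ∈ w.wGE 0, Function.Bijective fun y : N ⟶ Y => q ≫ y) ∧
      ∀ X ∈ w.wLE 0, Function.Bijective fun x : X ⟶ N => x ≫ n := by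
  obtain ⟨A₀, B₀, a₀, b₀, δ₀, hT₀, hA₀, hB₀⟩ := hC₀
  obtain ⟨N, q, r, hN⟩ := distinguished_cocone_triangle (a₀ ≫ vm)
  let O := Triangulated.someOctahedron rfl hT₀ hT hN
  have hB₀' : B₀⟦(1 : ℤ)⟧ ∈ w.wGE 2 := shift_mem_shiftedSet hB₀ 1 (by omega)
  refine ⟨N, q, O.m₃, O.comm₃, ?_, fun Y hY => ?_, fun X hX => ?_⟩
  · exact w.mem_wGE_zero_iff.2 <|
      w.mem_ge_of_distTriang O.mem (w.mem_wGE_zero_iff.1 (w.wGE_antitone zero_le_one hB₀)) hMp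
  · exact w.bijective_precomp_of_distTriang hN hA₀ (by omega) hY
  · exact w.bijective_comp_of_distTriang (rot_of_distTriang _ O.mem) hB₀' (by omega) hX

end WeightStructure

/-- Given weight filtrations of `M₋` avoiding weight `-1` (with weight-zero quotient
`π₀ : M₋ ⟶ G₋`) and of `M₊` avoiding weight `1` (with weight-zero subobject
`i₀ : G₊ ⟶ M₊`), the map `g ↦ i₀ ∘ g ∘ π₀` is a bijection
`Hom(G₋, G₊) ≃ Hom(M₋, M₊)`; in particular there is a unique `φ` with
`i₀ ∘ φ ∘ π₀ = u`, and if some cone `C₀[1]` of `u` has `C₀` without weights `-1` and `0`,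
this unique `φ` is an isomorphism. -/
theorem hom_bijective_and_iso
    {C : Type u} [Category.{v} C] [Preadditive C] [HasZeroObject C]
    [HasShift C ℤ] [∀ n : ℤ, (shiftFunctor C n).Additive] [Pretriangulated C]
    [IsTriangulated C]
    (w : WeightStructure C) (Mm Mp : C) (u : Mm ⟶ Mp)
    (hMm : Mm ∈ w.le) (hMp : Mp ∈ w.ge)
    (A Gm : C) (a : A ⟶ Mm) (π₀ : Mm ⟶ Gm) (δm : Gm ⟶ A⟦(1:ℤ)⟧)
    (hTm : Triangle.mk a π₀ δm ∈ distTriang C)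
    (hA : A ∈ w.wLE (-2)) (hGm : Gm ∈ w.ge)
    (Gp B : C) (i₀ : Gp ⟶ Mp) (b : Mp ⟶ B) (δp : B ⟶ Gp⟦(1:ℤ)⟧)
    (hTp : Triangle.mk i₀ b δp ∈ distTriang C)
    (hGp : Gp ∈ w.le) (hB : B ∈ w.wGE 2) :
    Function.Bijective (fun g : Gm ⟶ Gp => π₀ ≫ g ≫ i₀) ∧
    (∃! φ : Gm ⟶ Gp, π₀ ≫ φ ≫ i₀ = u) ∧
    (∀ (C₀ : C) (vm : C₀ ⟶ Mm) (vp : Mp ⟶ C₀⟦(1:ℤ)⟧),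
      Triangle.mk vm u vp ∈ (distTriang C) → w.WithoutWeights (-1) 0 C₀ →
      ∀ φ : Gm ⟶ Gp, π₀ ≫ φ ≫ i₀ = u → IsIso φ) := by
  have hπ₀ : ∀ Y ∈ w.wGE 0, Function.Bijective fun y : Gm ⟶ Y => π₀ ≫ y :=
    fun Y => w.bijective_precomp_of_distTriang hTm hA (by omega)
  have hi₀ : ∀ X ∈ w.wLE 0, Function.Bijective fun x : X ⟶ Gp => x ≫ i₀ :=
    fun X => w.bijective_comp_of_distTriang hTp hB (by omega)
  have hMp₀ := w.mem_wGE_zero_iff.2 hMp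
  have hGm₀ : Gm ∈ w.wLE 0 := w.mem_wLE_zero_iff.2 <| w.mem_le_of_distTriang
    (rot_of_distTriang _ hTm) hMm <| w.mem_wLE_zero_iff.1 <|
      w.wLE_mono (by omega) (shift_mem_shiftedSet hA 1 rfl)
  have hbij : Function.Bijective fun g : Gm ⟶ Gp => π₀ ≫ g ≫ i₀ :=
    (hπ₀ Mp hMp₀).comp (hi₀ Gm hGm₀)
  refine ⟨hbij, hbij.existsUnique u, fun C₀ vm vp hT hC₀ φ hφ => ?_⟩
  obtain ⟨N, q, n, rfl, hN₀, hq, hn⟩ := w.exists_factorization_of_withoutWeights hT hC₀ hMp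
  obtain ⟨e, rfl⟩ := (hπ₀ N hN₀).2 q
  have : IsIso e := isIso_of_bijective_precomp _ π₀ e (w.mem_wGE_zero_iff.2 hGm) hN₀ hπ₀ hq
  have hφe : φ ≫ i₀ = e ≫ n := (hπ₀ Mp hMp₀).1 (by simpa using hφ)
  refine isIso_of_bijective_postcomp _ φ i₀ hGm₀ (w.mem_wLE_zero_iff.2 hGp) hi₀ fun X hX => ?_
  have he : Function.Bijective fun x : X ⟶ Gm => x ≫ e :=
    ⟨fun x y h => by simpa using h =≫ inv e, fun y => ⟨y ≫ inv e, by simp⟩⟩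
  simpa [hφe, Function.comp_def] using (hn X hX).comp he
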